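/- arXiv:2603.20660 — 3 statements merged into one kernel-verified Lean document; each statement's English description precedes it below -/
import Mathlib

section
/- Let (F₊, F₋, d₊, d₋) be a factorisation of f ∈ R and (G₊, G₋, δ₊, δ₋) a factorisation of g ∈ R. Define H₊ := (F₊ ⊗_R G₊) ⊕ (F₋ ⊗_R G₋) and H₋ := (F₋ ⊗_R G₊) ⊕ (F₊ ⊗_R G₋), with structure maps in block form D₊ := [[d₊ ⊗ 1, 0],[0, d₋ ⊗ 1]] + [[0, −1 ⊗ δ₋],[1 ⊗ δ₊, 0]] : H₊ → H₋ (i.e. x ⊗ y ↦ d₊x ⊗ y + x ⊗ δ₊y on F₊⊗G₊ and x ⊗ y ↦ d₋x ⊗ y − x ⊗ δ₋y on F₋⊗G₋) and D₋ := [[d₋ ⊗ 1, 1 ⊗ δ₋],[−1 ⊗ δ₊, d₊ ⊗ 1]] : H₋ → H₊. Then (H₊, H₋, D₊, D₋) is a factorisation of f + g. In particular, if g = −f, the tensor product is a 2-periodic complex, i.e. D₋ ∘ D₊ = 0 and D₊ ∘ D₋ = 0. -/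
open TensorProduct

/-- The tensor product of a factorisation of `f` and a factorisation of
`g`, with `H₊ = (F₊ ⊗ G₊) ⊕ (F₋ ⊗ G₋)`, `H₋ = (F₋ ⊗ G₊) ⊕ (F₊ ⊗ G₋)` and the block
structure maps `D₊ = [[d₊⊗1, −1⊗δ₋],[1⊗δ₊, d₋⊗1]]`, `D₋ = [[d₋⊗1, 1⊗δ₋],[−1⊗δ₊, d₊⊗1]]`,
is a factorisation of `f + g`; in particular for `g = −f` it is a 2-periodic complex. -/
theorem tensor_product_of_factorisations
    {R : Type*} [CommRing R] (f g : R)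
    {Fp Fm Gp Gm : Type*}
    [AddCommGroup Fp] [AddCommGroup Fm] [AddCommGroup Gp] [AddCommGroup Gm]
    [Module R Fp] [Module R Fm] [Module R Gp] [Module R Gm]
    (dp : Fp →ₗ[R] Fm) (dm : Fm →ₗ[R] Fp)
    (δp : Gp →ₗ[R] Gm) (δm : Gm →ₗ[R] Gp)
    (hF : dm ∘ₗ dp = f • LinearMap.id) (hF' : dp ∘ₗ dm = f • LinearMap.id)
    (hG : δm ∘ₗ δp = g • LinearMap.id) (hG' : δp ∘ₗ δm = g • LinearMap.id)
    (Dp : ((Fp ⊗[R] Gp) × (Fm ⊗[R] Gm)) →ₗ[R] ((Fm ⊗[R] Gp) × (Fp ⊗[R] Gm)))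
    (Dm : ((Fm ⊗[R] Gp) × (Fp ⊗[R] Gm)) →ₗ[R] ((Fp ⊗[R] Gp) × (Fm ⊗[R] Gm)))
    (hDp : Dp =
      ((TensorProduct.map dp LinearMap.id) ∘ₗ LinearMap.fst R (Fp ⊗[R] Gp) (Fm ⊗[R] Gm)
        - (TensorProduct.map LinearMap.id δm) ∘ₗ LinearMap.snd R (Fp ⊗[R] Gp) (Fm ⊗[R] Gm)).prod
      ((TensorProduct.map LinearMap.id δp) ∘ₗ LinearMap.fst R (Fp ⊗[R] Gp) (Fm ⊗[R] Gm)
        + (TensorProduct.map dm LinearMap.id) ∘ₗ LinearMap.snd R (Fp ⊗[R] Gp) (Fm ⊗[R] Gm)))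
    (hDm : Dm =
      ((TensorProduct.map dm LinearMap.id) ∘ₗ LinearMap.fst R (Fm ⊗[R] Gp) (Fp ⊗[R] Gm)
        + (TensorProduct.map LinearMap.id δm) ∘ₗ LinearMap.snd R (Fm ⊗[R] Gp) (Fp ⊗[R] Gm)).prod
      (-(TensorProduct.map LinearMap.id δp) ∘ₗ LinearMap.fst R (Fm ⊗[R] Gp) (Fp ⊗[R] Gm)
        + (TensorProduct.map dp LinearMap.id) ∘ₗ LinearMap.snd R (Fm ⊗[R] Gp) (Fp ⊗[R] Gm))) :
    (Dm ∘ₗ Dp = (f + g) • LinearMap.id ∧ Dp ∘ₗ Dm = (f + g) • LinearMap.id)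
    ∧ (g = -f → Dm ∘ₗ Dp = 0 ∧ Dp ∘ₗ Dm = 0) := by
  have hF1 : ∀ x, dm (dp x) = f • x := fun x => by simpa using LinearMap.congr_fun hF x
  have hF2 : ∀ x, dp (dm x) = f • x := fun x => by simpa using LinearMap.congr_fun hF' x
  have hG1 : ∀ x, δm (δp x) = g • x := fun x => by simpa using LinearMap.congr_fun hG x
  have hG2 : ∀ x, δp (δm x) = g • x := fun x => by simpa using LinearMap.congr_fun hG' x
  have h1 : Dm ∘ₗ Dp = (f + g) • LinearMap.id := by
    rw [hDp, hDm]
    ext x y <;>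
      simp [hF1, hF2, hG1, hG2, TensorProduct.smul_tmul', TensorProduct.tmul_smul, add_smul,
        TensorProduct.tmul_add, TensorProduct.add_tmul, add_comm]
  have h2 : Dp ∘ₗ Dm = (f + g) • LinearMap.id := by
    rw [hDp, hDm]
    ext x y <;>
      simp [hF1, hF2, hG1, hG2, TensorProduct.smul_tmul', TensorProduct.tmul_smul, add_smul,
        TensorProduct.tmul_add, TensorProduct.add_tmul, add_comm]
  exact ⟨⟨h1, h2⟩, fun h => by
    rw [h1, h2, h, add_neg_cancel, zero_smul, zero_smul]; exact ⟨rfl, rfl⟩⟩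
end

section
/- Let s ∈ M and let d : M → R be the linear functional d(m) := polar Q (s, m). Then for every element x of the Clifford algebra Cl(Q), the super-commutator of x with ι(s) equals the left contraction of x by d: ι(s)·x − involute(x)·ι(s) = d ⌋ x, where involute denotes the grade involution of Cl(Q) (the algebra automorphism with involute(ι(m)) = −ι(m)) and d ⌋ (−) denotes left contraction by d (the unique operator with d ⌋ 1 = 0 and d ⌋ (ι(m)·x) = d(m)•x − ι(m)·(d ⌋ x)). In particular, on elements of even degree this super-commutator is the ordinary commutator and on elements of odd degree it is the anticommutator, and it acts as interior multiplication by s with respect to the polar pairing. -/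
/-! Both sides are linear in `x` and vanish on scalars, and the anticommutation relation
`ι s * ι m + ι m * ι s = polar Q s m` shows that `x ↦ ι s * x - involute x * ι s` obeys the
recursion `d ⌋ (ι m * x) = d m • x - ι m * (d ⌋ x)` that characterises left contraction;
induction on `x` from the left concludes. -/

namespace CliffordAlgebra

variable {R M : Type*} [CommRing R] [AddCommGroup M] [Module R M] {Q : QuadraticForm R M}

theorem ι_mul_ι_mul_sub_involute_mul_ι (s m : M) (x : CliffordAlgebra Q) :
    ι Q s * (ι Q m * x) - involute (ι Q m * x) * ι Q s =
      QuadraticMap.polar Q s m • x - ι Q m * (ι Q s * x - involute x * ι Q s) := by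
  rw [map_mul, involute_ι, Algebra.smul_def, ← mul_assoc, ι_mul_ι_comm]
  noncomm_ring

end CliffordAlgebra

/-- For `s ∈ M` with associated linear functional `d = polar Q (s, ·)`,
the super-commutator of any Clifford algebra element `x` with `ι s` equals the left
contraction of `x` by `d`: `ι s · x − involute x · ι s = d ⌋ x`. -/
theorem super_commutator_eq_contractLeft
    {R M : Type*} [CommRing R] [AddCommGroup M] [Module R M]
    (Q : QuadraticForm R M) (s : M) :
    ∀ x : CliffordAlgebra Q,
      CliffordAlgebra.ι Q s * x - CliffordAlgebra.involute x * CliffordAlgebra.ι Q s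
        = CliffordAlgebra.contractLeft (Q := Q) (QuadraticMap.polarBilin Q s) x := by
  intro x
  induction x using CliffordAlgebra.left_induction with
  | algebraMap r =>
    rw [CliffordAlgebra.contractLeft_algebraMap, CliffordAlgebra.involute.commutes,
      Algebra.commutes, sub_self]
  | add x y hx hy =>
    rw [map_add, map_add, ← hx, ← hy]
    noncomm_ring
  | ι_mul x m hx =>
    rw [CliffordAlgebra.contractLeft_ι_mul, ← hx,
      CliffordAlgebra.ι_mul_ι_mul_sub_involute_mul_ι, QuadraticMap.polarBilin_apply_apply]
end

section
/- Let λ₁, …, λₙ be a basis of Λ and set ω := ι(λ₁, 0)·ι(λ₂, 0)⋯ι(λₙ, 0) ∈ Cl. Then the kernel of right multiplication by ω on Cl is exactly the left ideal ⟨Λ⟩: {c ∈ Cl : c·ω = 0} = ⟨Λ⟩. Consequently, the map c ↦ c·ω descends to an injective k-linear map S_Λ = Cl/⟨Λ⟩ ↪ Cl, whose image is the left ideal Cl·ω. -/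
noncomputable section

variable (k : Type*) [Field k] (Λ : Type*) [AddCommGroup Λ] [Module k Λ]

/-- The hyperbolic quadratic form `Q (x, φ) = φ x` on `H = Λ × Λ*`. -/
def hypQ : QuadraticForm k (Λ × Module.Dual k Λ) :=
  (QuadraticForm.dualProd k Λ).comp (LinearEquiv.prodComm k Λ (Module.Dual k Λ)).toLinearMap

/-- The left ideal `⟨Λ⟩` of the Clifford algebra of `(H, Q)` generated by
`{ι (λ, 0) : λ ∈ Λ}`. -/
def leftIdealΛ : Submodule (CliffordAlgebra (hypQ k Λ)) (CliffordAlgebra (hypQ k Λ)) :=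
  Submodule.span (CliffordAlgebra (hypQ k Λ))
    (Set.range fun l : Λ => CliffordAlgebra.ι (hypQ k Λ) (l, 0))

/-!
Write `fᵢ = ι(λᵢ, 0)` and `gᵢ = ι(0, λᵢ*)` for the dual basis `λᵢ*`. These satisfy the canonical
anticommutation relations: the `f`'s anticommute and square to zero, the `g`'s anticommute, and
`fᵢ gⱼ + gⱼ fᵢ = δᵢⱼ`. Every `ι(λ, 0)` is a combination of the `f`'s and so kills
`ω = f₁ ⋯ fₙ`, whence `⟨Λ⟩ ω = 0`. Conversely, with `ω' = gₙ ⋯ g₁`, peeling off one pair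
`fᵢ (⋯) gᵢ` at a time shows `1 - ω ω' ∈ ⟨Λ⟩`, so `c ω = 0` gives `c = c (1 - ω ω') ∈ ⟨Λ⟩`.
-/

section Ring

variable {R : Type*} [Ring R] {α : Type*}

theorem mul_prod_map_eq_zero_of_mem (f : α → R) (hsq : ∀ a, f a * f a = 0)
    (hanti : ∀ a b, f a * f b = -(f b * f a)) {L : List α} {a : α} (ha : a ∈ L) :
    f a * (L.map f).prod = 0 := by
  induction L with
  | nil => simp at ha
  | cons c L ih =>
    rcases List.mem_cons.mp ha with rfl | ha
    · simp only [List.map_cons, List.prod_cons, ← mul_assoc, hsq, zero_mul]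
    · simp only [List.map_cons, List.prod_cons, ← mul_assoc, hanti a c]
      rw [neg_mul, mul_assoc, ih ha, mul_zero, neg_zero]

theorem prod_map_mul_prod_map_reverse_cons (f g : α → R) (a : α) (L : List α) :
    ((a :: L).map f).prod * ((a :: L).map g).reverse.prod
      = f a * ((L.map f).prod * (L.map g).reverse.prod) * g a := by
  simp [mul_assoc]

theorem commute_prod_map_mul_prod_map_reverse (f g : α → R) (x : R) {L : List α}
    (hf : ∀ a ∈ L, x * f a = -(f a * x)) (hg : ∀ a ∈ L, x * g a = -(g a * x)) :
    Commute x ((L.map f).prod * (L.map g).reverse.prod) := by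
  induction L with
  | nil => simp
  | cons a L ih =>
    have hW := ih (fun b hb => hf b (.tail a hb)) (fun b hb => hg b (.tail a hb))
    rw [prod_map_mul_prod_map_reverse_cons]
    set W := (L.map f).prod * (L.map g).reverse.prod
    calc x * (f a * W * g a) = -(f a * (x * W) * g a) := by
          rw [← mul_assoc, ← mul_assoc, hf a List.mem_cons_self]; noncomm_ring
      _ = -(f a * W * (x * g a)) := by rw [hW.eq]; noncomm_ring
      _ = f a * W * g a * x := by rw [hg a List.mem_cons_self]; noncomm_ring

theorem one_sub_prod_map_mul_prod_map_reverse_mem (I : Submodule R R) (f g : α → R)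
    (hfI : ∀ a, f a ∈ I)
    (hff : ∀ a b, f a * f b = -(f b * f a)) (hgg : ∀ a b, g a * g b = -(g b * g a))
    (hfg : ∀ a b, a ≠ b → f a * g b = -(g b * f a)) (hfg_self : ∀ a, f a * g a + g a * f a = 1)
    {L : List α} (hL : L.Nodup) :
    1 - (L.map f).prod * (L.map g).reverse.prod ∈ I := by
  induction L with
  | nil => simp
  | cons a L ih =>
    obtain ⟨haL, hL⟩ := List.nodup_cons.mp hL
    set W := (L.map f).prod * (L.map g).reverse.prod
    have hne : ∀ b ∈ L, a ≠ b := fun b hb hab => haL (hab ▸ hb)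
    have hfW : Commute (f a) W :=
      commute_prod_map_mul_prod_map_reverse f g (f a) (fun b _ => hff a b)
        (fun b hb => hfg a b (hne b hb))
    have hgW : Commute (g a) W :=
      commute_prod_map_mul_prod_map_reverse f g (g a)
        (fun b hb => by rw [hfg b a (hne b hb).symm, neg_neg]) (fun b _ => hgg a b)
    have hstep : f a * W * g a = W - g a * W * f a := by
      rw [mul_assoc, ← hgW.eq, ← mul_assoc, eq_sub_of_add_eq (hfg_self a), sub_mul, one_mul,
        mul_assoc (g a), hfW.eq, ← mul_assoc]
    rw [prod_map_mul_prod_map_reverse_cons, hstep, sub_sub_eq_add_sub, add_sub_right_comm]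
    exact I.add_mem (ih hL) (I.smul_mem (g a * W) (hfI a))

end Ring

section Spinor

open CliffordAlgebra

variable {k Λ}

theorem hypQ_apply (x : Λ) (φ : Module.Dual k Λ) : hypQ k Λ (x, φ) = φ x := rfl

theorem ι_mul_ι_add_swap_hypQ (x x' : Λ) (φ φ' : Module.Dual k Λ) :
    ι (hypQ k Λ) (x, φ) * ι (hypQ k Λ) (x', φ') + ι (hypQ k Λ) (x', φ') * ι (hypQ k Λ) (x, φ)
      = algebraMap k _ (φ x' + φ' x) := by
  rw [ι_mul_ι_add_swap]
  congr 1
  simp only [QuadraticMap.polar, hypQ_apply, Prod.mk_add_mk, map_add, LinearMap.add_apply]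
  ring

theorem ι_inl_mul_ι_inl (l l' : Λ) :
    ι (hypQ k Λ) (l, 0) * ι (hypQ k Λ) (l', 0) = -(ι (hypQ k Λ) (l', 0) * ι (hypQ k Λ) (l, 0)) :=
  eq_neg_of_add_eq_zero_left <| by
    rw [ι_mul_ι_add_swap_hypQ, LinearMap.zero_apply, LinearMap.zero_apply, add_zero, map_zero]

theorem ι_inl_mul_self (l : Λ) : ι (hypQ k Λ) (l, 0) * ι (hypQ k Λ) (l, 0) = 0 := by
  simp [ι_sq_scalar, hypQ_apply]

theorem ι_inr_mul_ι_inr (φ φ' : Module.Dual k Λ) :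
    ι (hypQ k Λ) (0, φ) * ι (hypQ k Λ) (0, φ') = -(ι (hypQ k Λ) (0, φ') * ι (hypQ k Λ) (0, φ)) :=
  eq_neg_of_add_eq_zero_left <| by
    rw [ι_mul_ι_add_swap_hypQ, map_zero φ, map_zero φ', add_zero, map_zero]

theorem ι_inl_mul_ι_inr_add_swap (l : Λ) (φ : Module.Dual k Λ) :
    ι (hypQ k Λ) (l, 0) * ι (hypQ k Λ) (0, φ) + ι (hypQ k Λ) (0, φ) * ι (hypQ k Λ) (l, 0)
      = algebraMap k _ (φ l) := by
  simpa using ι_mul_ι_add_swap_hypQ l 0 0 φ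

theorem ι_inl_mem_leftIdealΛ (l : Λ) : ι (hypQ k Λ) (l, 0) ∈ leftIdealΛ k Λ :=
  Submodule.subset_span ⟨l, rfl⟩

variable {α : Type*} (b : Module.Basis α k Λ) {L : List α}

theorem ι_inl_mul_prod_basis_eq_zero (hL : ∀ i, i ∈ L) (l : Λ) :
    ι (hypQ k Λ) (l, 0) * (L.map fun i => ι (hypQ k Λ) (b i, 0)).prod = 0 := by
  have hmap : (LinearMap.mulRight k (L.map fun i => ι (hypQ k Λ) (b i, 0)).prod ∘ₗ
      ι (hypQ k Λ) ∘ₗ LinearMap.inl k Λ (Module.Dual k Λ)) = 0 :=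
    b.ext fun i => mul_prod_map_eq_zero_of_mem (fun i => ι (hypQ k Λ) (b i, 0))
      (fun i => ι_inl_mul_self (b i)) (fun i j => ι_inl_mul_ι_inl (b i) (b j)) (hL i)
  exact LinearMap.congr_fun hmap l

theorem one_sub_prod_basis_mul_prod_dualBasis_mem (hL : L.Nodup) :
    1 - (L.map fun i => ι (hypQ k Λ) (b i, 0)).prod
      * (L.map fun i => ι (hypQ k Λ) (0, b.coord i)).reverse.prod ∈ leftIdealΛ k Λ := by
  refine one_sub_prod_map_mul_prod_map_reverse_mem _ _ _ (fun i => ι_inl_mem_leftIdealΛ (b i))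
    (fun i j => ι_inl_mul_ι_inl _ _) (fun i j => ι_inr_mul_ι_inr _ _) (fun i j hij => ?_)
    (fun i => ?_) hL
  · refine eq_neg_of_add_eq_zero_left ?_
    simp [ι_inl_mul_ι_inr_add_swap, hij]
  · simp [ι_inl_mul_ι_inr_add_swap]

theorem mul_prod_basis_eq_zero_iff (hL : ∀ i, i ∈ L) (hnd : L.Nodup)
    (c : CliffordAlgebra (hypQ k Λ)) :
    c * (L.map fun i => ι (hypQ k Λ) (b i, 0)).prod = 0 ↔ c ∈ leftIdealΛ k Λ := by
  set ω := (L.map fun i => ι (hypQ k Λ) (b i, 0)).prod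
  set ω' := (L.map fun i => ι (hypQ k Λ) (0, b.coord i)).reverse.prod
  constructor
  · intro hc
    have hc' : c = c * (1 - ω * ω') := by
      rw [mul_sub, mul_one, ← mul_assoc, hc, zero_mul, sub_zero]
    rw [hc']
    exact (leftIdealΛ k Λ).smul_mem c (one_sub_prod_basis_mul_prod_dualBasis_mem b hnd)
  · intro hc
    induction hc using Submodule.span_induction with
    | mem x hx => obtain ⟨l, rfl⟩ := hx; exact ι_inl_mul_prod_basis_eq_zero b hL l
    | zero => simp
    | add x y _ _ hx hy => rw [add_mul, hx, hy, add_zero]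
    | smul a x _ hx => rw [smul_eq_mul, mul_assoc, hx, mul_zero]

end Spinor

/-- For a basis `λ₁, …, λₙ` of `Λ`, set
`ω := ι(λ₁,0)·ι(λ₂,0)⋯ι(λₙ,0)`. The kernel of right multiplication by `ω` on `Cl` is
exactly the left ideal `⟨Λ⟩`; consequently `c ↦ c·ω` descends to an injective `k`-linear
map `S_Λ = Cl/⟨Λ⟩ ↪ Cl` whose image is the left ideal `Cl·ω`. -/
theorem kernel_of_right_multiplication_by_omega
    (n : ℕ) (b : Module.Basis (Fin n) k Λ)
    (ω : CliffordAlgebra (hypQ k Λ))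
    (hω : ω = (List.ofFn fun i : Fin n => CliffordAlgebra.ι (hypQ k Λ) (b i, 0)).prod) :
    (∀ c : CliffordAlgebra (hypQ k Λ), c * ω = 0 ↔ c ∈ leftIdealΛ k Λ)
    -- consequently, `c ↦ c·ω` descends to an injective map on `S_Λ = Cl/⟨Λ⟩` …
    ∧ (∀ c c' : CliffordAlgebra (hypQ k Λ), c * ω = c' * ω ↔ c - c' ∈ leftIdealΛ k Λ)
    -- … whose image is the left ideal `Cl·ω`
    ∧ Set.range (fun c : CliffordAlgebra (hypQ k Λ) => c * ω)
      = {x : CliffordAlgebra (hypQ k Λ) | ∃ c, x = c * ω} := by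
  have hker : ∀ c, c * ω = 0 ↔ c ∈ leftIdealΛ k Λ := by
    rw [hω, List.ofFn_eq_map]
    exact mul_prod_basis_eq_zero_iff b List.mem_finRange (List.nodup_finRange n)
  refine ⟨hker, fun c c' => ?_, ?_⟩
  · rw [← hker, sub_mul, sub_eq_zero]
  · ext x
    simp only [Set.mem_range, Set.mem_ofPred_eq, eq_comm]

end
end
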